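/- Let h be a complex number with exp(h) ≠ 1 and let [x] = (exp(hx/2) − exp(−hx/2))/(exp(h/2) − exp(−h/2)) for x ∈ ℂ. Let k ≥ 1 be an integer, fix two distinct indices j, m in the integer interval [−k, k−1], and let complex numbers L_{i,2k+2} (i ∈ [−k−1, k]), L_{l,2k+1} (l ∈ [−k, k]) and L_{i,2k} (i ∈ [−k, k−1], i ≠ j, i ≠ m) be given such that [L_{i,2k+1} − L_{l,2k+1} − s'] ≠ 0 and [L_{i,2k+1} − L_{l,2k+1} − s' + 1] ≠ 0 for all i ≠ l in [−k, k] and s' ∈ {0, 1}. Then ∑_{s'=0}^{1} ∑_{l=−k}^{k} (−1)^{s'} · ( ∏_{i=−k−1}^{k} [L_{i,2k+2} − L_{l,2k+1} − s'] · ∏_{i=−k, i≠j,m}^{k−1} [L_{i,2k} − L_{l,2k+1} − s'] ) / ( ∏_{i≠l, i=−k}^{k} [L_{i,2k+1} − L_{l,2k+1} − s'][L_{i,2k+1} − L_{l,2k+1} − s' + 1] ) = 0. (Identity (24b).) -/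

import Mathlib

/-!
In the variable `Z = exp (h w)` a bracket is
`[y - w] = (exp (h y) - Z) / (exp (h (y + w) / 2) (q - q⁻¹))`. The double sum is a single sum
over the `4k + 2` nodes `w = L_{l,2k+1} + s'`: the sign `(-1)^{s'}` is the bracket `[±1]` between
`w` and the other node with the same `l`. The numerator has exactly two brackets fewer than there
are nodes, so the exponential prefactors of numerator and denominator combine to a constant
independent of `w`, and the summand becomes that constant times the Lagrange term
`P(Z_w) / ∏ (Z_{w'} - Z_w)` of a polynomial `P` of degree `4k`. The sum of these terms is the
coefficient of degree `4k + 1` of the interpolation of `P` at the nodes, which vanishes.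
-/

/-- The q-bracket `[x] = (exp(hx/2) - exp(-hx/2))/(exp(h/2) - exp(-h/2))`. -/
noncomputable def qbr (h x : ℂ) : ℂ :=
  (Complex.exp (h * x / 2) - Complex.exp (-(h * x) / 2)) /
    (Complex.exp (h / 2) - Complex.exp (-h / 2))

open Finset Polynomial Complex

lemma exp_half_sub_exp_neg_half_ne_zero {h : ℂ} (hh : exp h ≠ 1) :
    exp (h / 2) - exp (-h / 2) ≠ 0 := by
  have : exp (h / 2) - exp (-h / 2) = exp (-h / 2) * (exp h - 1) := by
    rw [mul_sub, ← exp_add, mul_one]; ring_nf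
  rw [this]
  exact mul_ne_zero (exp_ne_zero _) (sub_ne_zero.mpr hh)

lemma exp_half_sub_exp_neg_half_ne_zero_of_qbr_ne_zero {h x : ℂ} (hx : qbr h x ≠ 0) :
    exp (h / 2) - exp (-h / 2) ≠ 0 := by
  rintro hD
  exact hx (by rw [qbr, hD, div_zero])

lemma qbr_neg (h x : ℂ) : qbr h (-x) = -qbr h x := by
  rw [qbr, qbr, ← neg_div]; ring_nf

lemma qbr_one {h : ℂ} (hh : exp h ≠ 1) : qbr h 1 = 1 := by
  rw [qbr, mul_one]
  exact div_self (exp_half_sub_exp_neg_half_ne_zero hh)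

lemma qbr_sub (h x y : ℂ) :
    qbr h (x - y) = (exp (h * x) - exp (h * y)) /
      (exp (h * (x + y) / 2) * (exp (h / 2) - exp (-h / 2))) := by
  have : exp (h * x) - exp (h * y) =
      (exp (h * (x - y) / 2) - exp (-(h * (x - y)) / 2)) * exp (h * (x + y) / 2) := by
    rw [sub_mul, ← exp_add, ← exp_add]; ring_nf
  rw [this, mul_comm (exp (h * (x + y) / 2)), mul_div_mul_right _ _ (exp_ne_zero _), qbr]

lemma exp_mul_ne_of_qbr_sub_ne_zero {h x y : ℂ} (hxy : qbr h (x - y) ≠ 0) :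
    exp (h * x) ≠ exp (h * y) := fun he => hxy (by rw [qbr_sub, he, sub_self, zero_div])

lemma prod_qbr_sub {ι : Type*} (h w : ℂ) (s : Finset ι) (f : ι → ℂ) :
    ∏ i ∈ s, qbr h (f i - w) = (∏ i ∈ s, (exp (h * f i) - exp (h * w))) /
      (exp (h * (∑ i ∈ s, f i + #s * w) / 2) * (exp (h / 2) - exp (-h / 2)) ^ #s) := by
  simp only [qbr_sub]
  rw [prod_div_distrib, prod_mul_distrib, prod_const, ← exp_sum, ← sum_div, ← mul_sum,
    sum_add_distrib, sum_const, nsmul_eq_mul]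

theorem Lagrange.sum_eval_div_prod_sub_eq_zero {ι : Type*} [DecidableEq ι] {s : Finset ι}
    {v : ι → ℂ} (hvs : Set.InjOn v s) {P : ℂ[X]} (hP : P.degree < ↑(#s - 1)) :
    ∑ i ∈ s, P.eval (v i) / ∏ j ∈ s.erase i, (v i - v j) = 0 := by
  rw [← Lagrange.coeff_eq_sum hvs (hP.trans_le (by exact_mod_cast Nat.sub_le _ _)),
    coeff_eq_zero_of_degree_lt hP]

theorem sum_prod_qbr_div_prod_qbr_eq_zero {ι κ : Type*} [DecidableEq ι] (h : ℂ)
    (s : Finset ι) (x : ι → ℂ) (t : Finset κ) (y : κ → ℂ) (hst : #t + 2 = #s)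
    (hx : ∀ a ∈ s, ∀ b ∈ s, a ≠ b → qbr h (x b - x a) ≠ 0) :
    ∑ a ∈ s, (∏ c ∈ t, qbr h (y c - x a)) / ∏ b ∈ s.erase a, qbr h (x b - x a) = 0 := by
  obtain ⟨a₀, ha₀, b₀, hb₀, hab₀⟩ := one_lt_card.mp (by omega : 1 < #s)
  have hD := exp_half_sub_exp_neg_half_ne_zero_of_qbr_ne_zero (hx a₀ ha₀ b₀ hb₀ hab₀)
  set D := exp (h / 2) - exp (-h / 2) with hD_def
  -- nodes `-exp (h x a)`, so that `v a - v b = exp (h x b) - exp (h x a)` as in `qbr h (x b - x a)`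
  set v : ι → ℂ := fun a => -exp (h * x a)
  set P : ℂ[X] := ∏ c ∈ t, (X + C (exp (h * y c)))
  have hv : Set.InjOn v s := fun a ha b hb hab => by
    by_contra hne
    exact exp_mul_ne_of_qbr_sub_ne_zero (hx a ha b hb hne) (neg_inj.mp hab).symm
  have hP : P.degree < ↑(#s - 1) := by
    rw [degree_prod]
    simp only [degree_X_add_C, sum_const, nsmul_one]
    exact_mod_cast (by omega : #t < #s - 1)
  have hterm : ∀ a ∈ s, (∏ c ∈ t, qbr h (y c - x a)) / ∏ b ∈ s.erase a, qbr h (x b - x a) =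
      exp (h * (∑ b ∈ s, x b - ∑ c ∈ t, y c) / 2) * D *
        (P.eval (v a) / ∏ b ∈ s.erase a, (v a - v b)) := by
    intro a ha
    have hcard : #(s.erase a) = #t + 1 := by rw [card_erase_of_mem ha]; omega
    have hexp : exp (h * (∑ b ∈ s.erase a, x b + #(s.erase a) * x a) / 2) =
        exp (h * (∑ b ∈ s, x b - ∑ c ∈ t, y c) / 2) *
          exp (h * (∑ c ∈ t, y c + #t * x a) / 2) := by
      rw [← exp_add, sum_erase_eq_sub ha, hcard]; push_cast; ring_nf
    have hB : ∏ b ∈ s.erase a, (exp (h * x b) - exp (h * x a)) ≠ 0 :=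
      prod_ne_zero_iff.mpr fun b hb => sub_ne_zero.mpr
        (exp_mul_ne_of_qbr_sub_ne_zero (hx a ha b (mem_of_mem_erase hb) (ne_of_mem_erase hb).symm))
    rw [prod_qbr_sub, prod_qbr_sub, hexp, hcard, eval_prod]
    simp only [v, eval_add, eval_X, eval_C, neg_add_eq_sub, sub_neg_eq_add]
    rw [← hD_def, pow_succ]
    field_simp
  rw [sum_congr rfl hterm, ← mul_sum, Lagrange.sum_eval_div_prod_sub_eq_zero hv hP, mul_zero]

lemma prod_erase_product_range_two {ι M : Type*} [DecidableEq ι] [CommMonoid M]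
    (s : Finset ι) (f : ι × ℕ → M) {l : ι} (hl : l ∈ s) {t : ℕ} (ht : t < 2) :
    ∏ q ∈ (s ×ˢ range 2).erase (l, t), f q =
      f (l, 1 - t) * ∏ i ∈ s.erase l, f (i, 0) * f (i, 1) := by
  have : (s ×ˢ range 2).erase (l, t) = insert (l, 1 - t) (s.erase l ×ˢ range 2) := by
    ext ⟨i, u⟩
    simp only [mem_erase, mem_insert, mem_product, mem_range, ne_eq, Prod.mk.injEq]
    by_cases hil : i = l
    · subst hil; simp only [hl, true_and, not_true_eq_false, false_and, or_false]; omega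
    · simp [hil]
  rw [this, prod_insert (by simp), prod_product]
  simp [prod_range_succ]

lemma prod_erase_qbr_nodes {ι : Type*} [DecidableEq ι] {h : ℂ} (hh : exp h ≠ 1)
    (s : Finset ι) (L : ι → ℂ) {l : ι} (hl : l ∈ s) {t : ℕ} (ht : t < 2) :
    ∏ q ∈ (s ×ˢ range 2).erase (l, t), qbr h (L q.1 + q.2 - (L l + t)) =
      (-1) ^ t * ∏ i ∈ s.erase l, qbr h (L i - L l - t) * qbr h (L i - L l - t + 1) := by
  rw [prod_erase_product_range_two s _ hl ht]
  congr 1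
  · interval_cases t <;> norm_num [qbr_one hh, qbr_neg]
  · refine prod_congr rfl fun i _ => ?_
    congr 2 <;> push_cast <;> ring

lemma qbr_nodes_ne_zero {ι : Type*} {h : ℂ} (hh : exp h ≠ 1) (s : Finset ι) (L : ι → ℂ)
    (hL : ∀ i ∈ s, ∀ l ∈ s, i ≠ l → ∀ t ∈ range 2,
      qbr h (L i - L l - t) ≠ 0 ∧ qbr h (L i - L l - t + 1) ≠ 0) :
    ∀ a ∈ s ×ˢ range 2, ∀ b ∈ s ×ˢ range 2, a ≠ b → qbr h (L b.1 + b.2 - (L a.1 + a.2)) ≠ 0 := by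
  rintro ⟨l, t⟩ hlt ⟨i, u⟩ hiu hne
  obtain ⟨hl, ht⟩ := mem_product.mp hlt
  obtain ⟨hi, hu⟩ := mem_product.mp hiu
  rw [mem_range] at ht hu
  by_cases hil : i = l
  · subst hil
    interval_cases t <;> interval_cases u <;> simp_all [qbr_one hh, qbr_neg]
  · have := hL i hi l hl hil t (mem_range.mpr ht)
    interval_cases u
    · convert this.1 using 2; push_cast; ring
    · convert this.2 using 2; push_cast; ring

theorem identity_24b_general (h : ℂ) (hh : Complex.exp h ≠ 1) (k : ℤ)
    (j m : ℤ) (hj : j ∈ Finset.Icc (-k) (k - 1)) (hm : m ∈ Finset.Icc (-k) (k - 1))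
    (hjm : j ≠ m) (L2 L1 L0 : ℤ → ℂ)
    (hL1 : ∀ i ∈ Finset.Icc (-k) k, ∀ l ∈ Finset.Icc (-k) k, i ≠ l →
      ∀ s' ∈ Finset.range 2,
        qbr h (L1 i - L1 l - (s' : ℂ)) ≠ 0 ∧ qbr h (L1 i - L1 l - (s' : ℂ) + 1) ≠ 0) :
    ∑ s' ∈ Finset.range 2, ∑ l ∈ Finset.Icc (-k) k, (-1 : ℂ) ^ s' *
      ((∏ i ∈ Finset.Icc (-k - 1) k, qbr h (L2 i - L1 l - (s' : ℂ))) *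
        ∏ i ∈ ((Finset.Icc (-k) (k - 1)).erase j).erase m, qbr h (L0 i - L1 l - (s' : ℂ))) /
      ∏ i ∈ (Finset.Icc (-k) k).erase l,
        qbr h (L1 i - L1 l - (s' : ℂ)) * qbr h (L1 i - L1 l - (s' : ℂ) + 1) = 0 := by
  set I0 := ((Icc (-k) (k - 1)).erase j).erase m
  have hcard : #((Icc (-k - 1) k).disjSum I0) + 2 = #(Icc (-k) k ×ˢ range 2) := by
    rw [card_disjSum, card_erase_of_mem (mem_erase.mpr ⟨hjm.symm, hm⟩), card_erase_of_mem hj,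
      card_product, card_range, Int.card_Icc, Int.card_Icc, Int.card_Icc]
    have := mem_Icc.mp hj
    omega
  rw [sum_comm, ← sum_product']
  refine .trans (sum_congr rfl fun ⟨l, t⟩ hlt => ?_) (sum_prod_qbr_div_prod_qbr_eq_zero h _
    (fun q : ℤ × ℕ => L1 q.1 + q.2) _ (Sum.elim L2 L0) hcard (qbr_nodes_ne_zero hh _ L1 hL1))
  obtain ⟨hl, ht⟩ := mem_product.mp hlt
  rw [prod_erase_qbr_nodes hh _ L1 hl (mem_range.mp ht), prod_disjSum]
  simp only [Sum.elim_inl, Sum.elim_inr, sub_sub]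
  rcases neg_one_pow_eq_or ℂ t with hε | hε <;> rw [hε] <;> ring

/-- Identity (24b).  `L2 i` stands for `L_{i,2k+2}`, `L1 l` for `L_{l,2k+1}` and
`L0 i` for `L_{i,2k}`. -/
theorem identity_24b (h : ℂ) (hh : Complex.exp h ≠ 1) (k : ℤ) (hk : 1 ≤ k)
    (j m : ℤ) (hj : j ∈ Finset.Icc (-k) (k - 1)) (hm : m ∈ Finset.Icc (-k) (k - 1))
    (hjm : j ≠ m) (L2 L1 L0 : ℤ → ℂ)
    (hL1 : ∀ i ∈ Finset.Icc (-k) k, ∀ l ∈ Finset.Icc (-k) k, i ≠ l →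
      ∀ s' ∈ Finset.range 2,
        qbr h (L1 i - L1 l - (s' : ℂ)) ≠ 0 ∧ qbr h (L1 i - L1 l - (s' : ℂ) + 1) ≠ 0) :
    ∑ s' ∈ Finset.range 2, ∑ l ∈ Finset.Icc (-k) k, (-1 : ℂ) ^ s' *
      ((∏ i ∈ Finset.Icc (-k - 1) k, qbr h (L2 i - L1 l - (s' : ℂ))) *
        ∏ i ∈ ((Finset.Icc (-k) (k - 1)).erase j).erase m, qbr h (L0 i - L1 l - (s' : ℂ))) /
      ∏ i ∈ (Finset.Icc (-k) k).erase l,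
        qbr h (L1 i - L1 l - (s' : ℂ)) * qbr h (L1 i - L1 l - (s' : ℂ) + 1) = 0 :=
  identity_24b_general h hh k j m hj hm hjm L2 L1 L0 hL1
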